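/- Let h = ∑_{i=0}^ℓ c_i. Suppose a, a' ∈ L^{ℓ+1} satisfy Δ(a) ≠ 0 and Δ(a') ≠ 0, and let u ∈ Lˣ. Then there exists t ∈ (Lˣ)^ℓ with t · a = u a' (where u a' denotes coordinatewise scalar multiplication of a' by u) if and only if Δ(a) · Δ(a')^{-1} = u^h. -/

import Mathlib

/-- The action of the torus `T = (Lˣ)^ℓ` on `L^{ℓ+1}`:
`t · (a_0, a_1, …, a_ℓ) = ((∏_{i=1}^ℓ t_i^{c_i}) a_0, t_1⁻¹ a_1, …, t_ℓ⁻¹ a_ℓ)`. -/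
def torusAct {L : Type*} [Field L] {ℓ : ℕ} (c : Fin (ℓ + 1) → ℕ)
    (t : Fin ℓ → Lˣ) (a : Fin (ℓ + 1) → L) : Fin (ℓ + 1) → L :=
  Fin.cons ((∏ i : Fin ℓ, (t i : L) ^ c i.succ) * a 0)
    (fun i : Fin ℓ => ((t i : L))⁻¹ * a i.succ)

/-- The invariant polynomial `Δ(a_0, …, a_ℓ) = ∏_{i=0}^ℓ a_i^{c_i}`. -/
def Delta {L : Type*} [Field L] {ℓ : ℕ} (c : Fin (ℓ + 1) → ℕ)
    (a : Fin (ℓ + 1) → L) : L :=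
  ∏ i : Fin (ℓ + 1), a i ^ c i
/-!
`Δ` is invariant under the torus (the weight of `a₀` cancels the weights of `a₁, …, a_ℓ`
because `c₀ = 1`) and homogeneous of degree `h`, so `t · a = u a'` forces `Δ(a) = u^h Δ(a')`.
Conversely, on vectors with all coordinates nonzero `Δ` separates torus orbits: the coordinates
`1, …, ℓ` of `b` determine `tᵢ = aᵢ / bᵢ`, and then the equality `Δ(a) = Δ(b)` is exactly
the statement that coordinate `0` matches as well.
-/

section TorusOrbits

variable {L : Type*} [Field L] {ℓ : ℕ} {c : Fin (ℓ + 1) → ℕ}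

@[simp]
theorem torusAct_zero (t : Fin ℓ → Lˣ) (a : Fin (ℓ + 1) → L) :
    torusAct c t a 0 = (∏ i : Fin ℓ, (t i : L) ^ c i.succ) * a 0 :=
  rfl

@[simp]
theorem torusAct_succ (t : Fin ℓ → Lˣ) (a : Fin (ℓ + 1) → L) (i : Fin ℓ) :
    torusAct c t a i.succ = (t i : L)⁻¹ * a i.succ :=
  rfl

theorem delta_ne_zero_iff (hcpos : ∀ i, 0 < c i) {a : Fin (ℓ + 1) → L} :
    Delta c a ≠ 0 ↔ ∀ i, a i ≠ 0 := by
  simp only [Delta, Finset.prod_ne_zero_iff, Finset.mem_univ, true_imp_iff, ne_eq,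
    pow_eq_zero_iff (hcpos _).ne']

theorem delta_eq_mul_prod_succ (hc0 : c 0 = 1) (a : Fin (ℓ + 1) → L) :
    Delta c a = a 0 * ∏ i : Fin ℓ, a i.succ ^ c i.succ := by
  rw [Delta, Fin.prod_univ_succ, hc0, pow_one]

theorem delta_const_mul (x : L) (a : Fin (ℓ + 1) → L) :
    Delta c (fun i => x * a i) = x ^ (∑ i, c i) * Delta c a := by
  simp only [Delta, mul_pow, Finset.prod_mul_distrib, Finset.prod_pow_eq_pow_sum]

theorem delta_torusAct (hc0 : c 0 = 1) (t : Fin ℓ → Lˣ) (a : Fin (ℓ + 1) → L) :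
    Delta c (torusAct c t a) = Delta c a := by
  have ht : ∏ i : Fin ℓ, (t i : L) ^ c i.succ ≠ 0 :=
    Finset.prod_ne_zero_iff.mpr fun i _ => pow_ne_zero _ (t i).ne_zero
  simp only [delta_eq_mul_prod_succ hc0, torusAct_zero, torusAct_succ, mul_pow, inv_pow,
    Finset.prod_mul_distrib, Finset.prod_inv_distrib]
  field_simp

theorem exists_torusAct_eq_of_delta_eq (hc0 : c 0 = 1) {a b : Fin (ℓ + 1) → L}
    (ha : ∀ i, a i ≠ 0) (hb : ∀ i, b i ≠ 0) (h : Delta c a = Delta c b) :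
    ∃ t : Fin ℓ → Lˣ, torusAct c t a = b := by
  refine ⟨fun i => Units.mk0 (a i.succ / b i.succ) (div_ne_zero (ha _) (hb _)), ?_⟩
  funext j
  refine Fin.cases ?_ (fun i => ?_) j
  · have hB : ∏ i : Fin ℓ, b i.succ ^ c i.succ ≠ 0 :=
      Finset.prod_ne_zero_iff.mpr fun i _ => pow_ne_zero _ (hb _)
    rw [delta_eq_mul_prod_succ hc0, delta_eq_mul_prod_succ hc0] at h
    simp only [torusAct_zero, Units.val_mk0, div_pow, Finset.prod_div_distrib]
    field_simp
    linear_combination h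
  · have hai : a i.succ ≠ 0 := ha i.succ
    simp only [torusAct_succ, Units.val_mk0]
    field_simp

theorem exists_torusAct_eq_iff_delta_eq (hc0 : c 0 = 1) (hcpos : ∀ i, 0 < c i)
    {a b : Fin (ℓ + 1) → L} (ha : Delta c a ≠ 0) :
    (∃ t : Fin ℓ → Lˣ, torusAct c t a = b) ↔ Delta c a = Delta c b := by
  constructor
  · rintro ⟨t, rfl⟩
    exact (delta_torusAct hc0 t a).symm
  · intro h
    have hb : Delta c b ≠ 0 := h ▸ ha
    exact exists_torusAct_eq_of_delta_eq hc0 ((delta_ne_zero_iff hcpos).mp ha)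
      ((delta_ne_zero_iff hcpos).mp hb) h

end TorusOrbits

theorem orbit_scaled_iff_delta_ratio_general {L : Type*} [Field L] {ℓ : ℕ}
    (c : Fin (ℓ + 1) → ℕ) (hc0 : c 0 = 1) (hcpos : ∀ i, 0 < c i)
    (a a' : Fin (ℓ + 1) → L) (ha : Delta c a ≠ 0) (ha' : Delta c a' ≠ 0)
    (u : Lˣ) :
    (∃ t : Fin ℓ → Lˣ, torusAct c t a = fun i => (u : L) * a' i) ↔
      Delta c a * (Delta c a')⁻¹ = (u : L) ^ (∑ i : Fin (ℓ + 1), c i) := by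
  rw [exists_torusAct_eq_iff_delta_eq hc0 hcpos ha, delta_const_mul, ← mul_inv_eq_iff_eq_mul₀ ha']

/-- For stable vectors `a, a'` and a unit `u`, there is a torus element taking
`a` to `u • a'` if and only if `Δ(a) Δ(a')⁻¹ = u^h`, where `h = ∑ c_i` is the
Coxeter number. -/
theorem orbit_scaled_iff_delta_ratio {L : Type*} [Field L] {ℓ : ℕ} (hℓ : 1 ≤ ℓ)
    (c : Fin (ℓ + 1) → ℕ) (hc0 : c 0 = 1) (hcpos : ∀ i, 0 < c i)
    (a a' : Fin (ℓ + 1) → L) (ha : Delta c a ≠ 0) (ha' : Delta c a' ≠ 0)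
    (u : Lˣ) :
    (∃ t : Fin ℓ → Lˣ, torusAct c t a = fun i => (u : L) * a' i) ↔
      Delta c a * (Delta c a')⁻¹ = (u : L) ^ (∑ i : Fin (ℓ + 1), c i) :=
  orbit_scaled_iff_delta_ratio_general c hc0 hcpos a a' ha ha' u
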